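/- arXiv:1904.06766 — 2 statements merged into one kernel-verified Lean document; each statement's English description precedes it below -/
import Mathlib

section
/- Let X be a standard Borel space. The deduplication map D ↦ D.dedup (sending a finite multiset D to the multiset containing each element of D exactly once) from Multiset X to Multiset X is measurable with respect to the counting σ-algebra on both sides. -/
/- `countIn D E` is the number of elements of the finite multiset `D` lying in the set `E`,
counted with multiplicity. -/
open Classical in
noncomputable def countIn {X : Type*} (D : Multiset X) (E : Set X) : ℕ :=
  (D.filter (· ∈ E)).card

/-- The counting σ-algebra on the space of finite multisets over a measurable space `X`:
generated by the counting events `C(E,n) = {D | countIn D E = n}` for `E` measurable, `n : ℕ`. -/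
def countingMS (X : Type*) [MeasurableSpace X] : MeasurableSpace (Multiset X) :=
  MeasurableSpace.generateFrom
    {C : Set (Multiset X) |
      ∃ (E : Set X) (n : ℕ), MeasurableSet E ∧ C = {D : Multiset X | countIn D E = n}}

open Classical in
lemma measurable_countIn {X : Type*} [MeasurableSpace X] {A : Set X} (hA : MeasurableSet A) :
    @Measurable _ _ (countingMS X) _ (fun D => countIn D A) := by
  letI := countingMS X
  apply measurable_to_countable'
  intro n
  apply MeasurableSpace.measurableSet_generateFrom
  exact ⟨A, n, hA, rfl⟩

open Classical in
lemma countIn_ne_zero {X : Type*} {D : Multiset X} {S : Set X} :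
    countIn D S ≠ 0 ↔ ∃ x ∈ D, x ∈ S := by
  unfold countIn
  rw [Ne, Multiset.card_eq_zero, Multiset.filter_eq_nil]
  push_neg
  rfl

open Classical in
lemma countIn_dedup {X : Type*} (D : Multiset X) (E : Set X) :
    countIn D.dedup E = (D.toFinset.filter (· ∈ E)).card := by
  unfold countIn
  rw [← Multiset.toFinset_card_of_nodup (D.nodup_dedup.filter _),
    Multiset.toFinset_filter, Multiset.toFinset_dedup]

open Classical in
theorem deduplication_measurable {X : Type*} [MeasurableSpace X] [StandardBorelSpace X] :
    @Measurable _ _ (countingMS X) (countingMS X)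
      (fun D : Multiset X => D.dedup) := by
  obtain ⟨g, hgm, hgsep⟩ := exists_seq_separating X MeasurableSet.empty Set.univ
  refine @measurable_generateFrom _ _ (countingMS X) _ _ ?_
  rintro _ ⟨E, n, hE, rfl⟩
  show @MeasurableSet _ (countingMS X) {D : Multiset X | countIn D.dedup E = n}
  -- pattern map
  set pat : ∀ k : ℕ, X → (Fin k → Bool) := fun k x i => decide (x ∈ g i) with hpat
  set A : ∀ k : ℕ, (Fin k → Bool) → Set X := fun k p => E ∩ {x | pat k x = p} with hA
  have hAmeas : ∀ k p, MeasurableSet (A k p) := by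
    intro k p
    refine hE.inter ?_
    have : {x | pat k x = p} = ⋂ i : Fin k, (if p i then g i else (g i)ᶜ) := by
      ext x
      simp only [Set.mem_setOf_eq, Set.mem_iInter, funext_iff, hpat]
      refine forall_congr' fun i => ?_
      cases hpi : p i <;> simp [hpi, decide_eq_true_iff]
    rw [this]
    refine MeasurableSet.iInter fun i => ?_
    cases hpi : p i
    · simpa [hpi] using (hgm i).compl
    · simpa [hpi] using hgm i
  set F : ℕ → Multiset X → ℕ :=
    fun k D => (Finset.univ.filter (fun p : Fin k → Bool => countIn D (A k p) ≠ 0)).card with hF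
  have hFmeas : ∀ k, @Measurable _ _ (countingMS X) _ (F k) := by
    intro k
    have : F k = fun D => ∑ p : Fin k → Bool, if countIn D (A k p) ≠ 0 then 1 else 0 := by
      funext D
      exact Finset.card_filter _ _
    rw [this]
    exact Finset.measurable_sum _ fun p _ =>
      (measurable_from_top (f := fun m : ℕ => if m ≠ 0 then 1 else 0)).comp
        (measurable_countIn (hAmeas k p))
  have hkey : ∀ D : Multiset X, ∃ K, ∀ k ≥ K, F k D = countIn D.dedup E := by
    intro D
    set S : Finset X := D.toFinset.filter (· ∈ E) with hS
    have himage : ∀ k, F k D = (S.image (pat k)).card := by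
      intro k
      refine congrArg Finset.card (Finset.ext fun p => ?_)
      simp only [Finset.mem_filter, Finset.mem_univ, true_and, Finset.mem_image,
        countIn_ne_zero, hA, Set.mem_inter_iff, Set.mem_setOf_eq, hS,
        Multiset.mem_toFinset]
      constructor
      · rintro ⟨x, hxD, hxE, hxp⟩; exact ⟨x, ⟨hxD, hxE⟩, hxp⟩
      · rintro ⟨x, ⟨hxD, hxE⟩, hxp⟩; exact ⟨x, hxD, hxE, hxp⟩
    have hsep : ∀ x y : X, x ≠ y → ∃ i, ¬(x ∈ g i ↔ y ∈ g i) := by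
      intro x y hxy
      by_contra h
      push_neg at h
      exact hxy (hgsep x trivial y trivial fun i => h i)
    set sepIdx : X → X → ℕ := fun x y =>
      if h : ∃ i, ¬(x ∈ g i ↔ y ∈ g i) then Nat.find h else 0 with hsepIdx
    refine ⟨(S ×ˢ S).sup (fun q => sepIdx q.1 q.2) + 1, fun k hk => ?_⟩
    have hinj : Set.InjOn (pat k) S := by
      intro x hx y hy hpxy
      by_contra hxy
      have h := hsep x y hxy
      have hfind : sepIdx x y = Nat.find h := dif_pos h
      have hlt : Nat.find h < k := by
        have hmem : (x, y) ∈ S ×ˢ S :=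
          Finset.mem_product.mpr ⟨Finset.mem_coe.mp hx, Finset.mem_coe.mp hy⟩
        have h1 : sepIdx x y ≤ (S ×ˢ S).sup (fun q => sepIdx q.1 q.2) :=
          Finset.le_sup (f := fun q : X × X => sepIdx q.1 q.2) hmem
        omega
      have := congrFun hpxy ⟨Nat.find h, hlt⟩
      simp only [hpat, decide_eq_decide] at this
      exact Nat.find_spec h this
    rw [himage k, Finset.card_image_of_injOn hinj, countIn_dedup]
  have hset : {D : Multiset X | countIn D.dedup E = n}
      = ⋃ K : ℕ, ⋂ k : ℕ, ⋂ (_ : K ≤ k), {D : Multiset X | F k D = n} := by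
    ext D
    simp only [Set.mem_iUnion, Set.mem_iInter, Set.mem_setOf_eq]
    constructor
    · intro h
      obtain ⟨K, hK⟩ := hkey D
      exact ⟨K, fun k hk => (hK k hk).trans h⟩
    · rintro ⟨K, hK⟩
      obtain ⟨K', hK'⟩ := hkey D
      rw [← hK' (max K K') (le_max_right _ _)]
      exact hK (max K K') (le_max_left _ _)
  rw [hset]
  exact MeasurableSet.iUnion fun K => MeasurableSet.iInter fun k =>
    MeasurableSet.iInter fun _ => (hFmeas k) (measurableSet_singleton n)
end

section
/- Let X and V be standard Borel spaces, and let Φ : Multiset X → V. Suppose that for every m ∈ ℕ the composite map from (Fin m → X) to V sending a tuple (x₁, …, x_m) to Φ applied to the multiset {x₁, …, x_m} (i.e. Φ ∘ symₘ, where symₘ is the symmetrization map) is measurable with respect to the product (pi) measurable structure on Fin m → X. Then Φ is measurable with respect to the counting σ-algebra on Multiset X. -/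
/-!
Embed `X` into `ℝ` by a measurable embedding `f` with measurable left inverse `r`. The `i`-th
smallest element of `D.map f` is measurable for the counting σ-algebra, because it is `≤ t`
exactly when more than `i` points of `D` lie in `f ⁻¹' Iic t`. On the measurable piece
`{D | card D = m}`, applying `r` to these order statistics gives a measurable tuple whose
symmetrization is `D`, so there `Φ` factors as `Φ ∘ symₘ` after a measurable map.
-/

open Set Function

section CountIn

variable {X Y : Type*}

lemma countIn_univ (D : Multiset X) : countIn D univ = Multiset.card D := by
  simp [countIn]

lemma countIn_map (f : X → Y) (D : Multiset X) (E : Set Y) :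
    countIn (D.map f) E = countIn D (f ⁻¹' E) := by
  classical
  simp [countIn, Multiset.filter_map]

end CountIn

lemma List.Pairwise.getElem_le_iff_lt_countP {α : Type*} [LinearOrder α] {l : List α}
    (hl : l.Pairwise (· ≤ ·)) (t : α) {i : ℕ} (hi : i < l.length) :
    l[i] ≤ t ↔ i < l.countP (· ≤ t) := by
  induction l generalizing i with
  | nil => simp at hi
  | cons a l ih =>
    obtain ⟨ha, hl⟩ := List.pairwise_cons.mp hl
    by_cases hat : a ≤ t
    · cases i with
      | zero => simp [hat]
      | succ i => simp [hat, ih hl (Nat.lt_of_succ_lt_succ hi)]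
    · have hzero : l.countP (· ≤ t) = 0 :=
        List.countP_eq_zero.mpr fun b hb hbt => hat ((ha b hb).trans (by simpa using hbt))
      cases i with
      | zero => simp [hat, hzero]
      | succ i => simpa [hat, hzero] using fun h => hat ((ha _ (List.getElem_mem _)).trans h)

-- The `i`-th smallest element of `D`, counting from `0`; junk value `0` once `card D ≤ i`.
noncomputable def orderStat (i : ℕ) (D : Multiset ℝ) : ℝ :=
  (D.sort).getD i 0

lemma orderStat_le_iff (i : ℕ) (t : ℝ) (D : Multiset ℝ) :
    orderStat i D ≤ t ↔
      i < Multiset.card D ∧ i < countIn D (Iic t) ∨ Multiset.card D ≤ i ∧ 0 ≤ t := by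
  have hcount : countIn D (Iic t) = (D.sort).countP (· ≤ t) := by
    conv_lhs => rw [← Multiset.sort_eq D (· ≤ ·)]
    simp [countIn, List.countP_eq_length_filter]
  rcases lt_or_ge i (Multiset.card D) with hi | hi
  · have hi' : i < (D.sort).length := by rwa [Multiset.length_sort]
    rw [orderStat, List.getD_eq_getElem _ _ hi', hcount,
      (Multiset.pairwise_sort D (· ≤ ·)).getElem_le_iff_lt_countP t hi']
    simp [hi]
  · rw [orderStat, List.getD_eq_default _ _ (by rwa [Multiset.length_sort])]
    simp [hi, hi.not_gt]

lemma coe_ofFn_orderStat {D : Multiset ℝ} {m : ℕ} (hm : Multiset.card D = m) :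
    (↑(List.ofFn fun j : Fin m => orderStat j D) : Multiset ℝ) = D := by
  subst hm
  have : List.ofFn (fun j : Fin (Multiset.card D) => orderStat j D) = D.sort :=
    List.ext_getElem (by simp) fun j _ hj => by simp [orderStat]
  rw [this, Multiset.sort_eq]

lemma coe_ofFn_comp_orderStat_map {X : Type*} {f : X → ℝ} {r : ℝ → X} (hrf : LeftInverse r f)
    {D : Multiset X} {m : ℕ} (hm : Multiset.card D = m) :
    (↑(List.ofFn fun j : Fin m => r (orderStat j (D.map f))) : Multiset X) = D := by
  rw [← comp_def r, ← List.map_ofFn, ← Multiset.map_coe,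
    coe_ofFn_orderStat (by rwa [Multiset.card_map]), Multiset.map_map, hrf.comp_eq_id, Multiset.map_id]

section CountingMS

attribute [local instance] countingMS

variable {X Y V : Type*} [MeasurableSpace X] [MeasurableSpace Y] [MeasurableSpace V]

lemma measurableSet_countIn_eq {E : Set X} (hE : MeasurableSet E) (n : ℕ) :
    MeasurableSet {D : Multiset X | countIn D E = n} :=
  MeasurableSpace.measurableSet_generateFrom ⟨E, n, hE, rfl⟩

lemma measurable_countIn_s12 {E : Set X} (hE : MeasurableSet E) :
    Measurable fun D : Multiset X => countIn D E :=
  measurable_to_countable' (measurableSet_countIn_eq hE)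

lemma measurable_multiset_card : Measurable fun D : Multiset X => Multiset.card D := by
  simpa only [countIn_univ] using measurable_countIn_s12 (X := X) MeasurableSet.univ

lemma measurable_multiset_map {f : X → Y} (hf : Measurable f) :
    Measurable (Multiset.map f) :=
  measurable_generateFrom <| by
    rintro _ ⟨E, n, hE, rfl⟩
    simpa only [preimage_ofPred_eq, countIn_map] using measurableSet_countIn_eq (hf hE) n

lemma measurable_orderStat (i : ℕ) : Measurable (orderStat i) :=
  measurable_of_Iic fun t => by
    have : orderStat i ⁻¹' Iic t = (fun D => (Multiset.card D, countIn D (Iic t))) ⁻¹'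
        {p | i < p.1 ∧ i < p.2 ∨ p.1 ≤ i ∧ 0 ≤ t} := by
      ext D
      simp [orderStat_le_iff]
    rw [this]
    exact (measurable_multiset_card.prodMk (measurable_countIn_s12 measurableSet_Iic))
      MeasurableSet.of_discrete

theorem measurable_of_measurable_comp_ofFn {f : X → ℝ} {r : ℝ → X} (hf : Measurable f)
    (hr : Measurable r) (hrf : LeftInverse r f) {Φ : Multiset X → V}
    (h : ∀ m : ℕ, Measurable fun x : Fin m → X => Φ ↑(List.ofFn x)) : Measurable Φ := by
  set g : Multiset X × ℕ → V := fun p =>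
    Φ ↑(List.ofFn fun j : Fin p.2 => r (orderStat j (p.1.map f)))
  have hg : Measurable g := measurable_from_prod_countable_left fun m =>
    (h m).comp <| measurable_pi_lambda _ fun j =>
      hr.comp <| (measurable_orderStat j).comp (measurable_multiset_map hf)
  have hΦ : Φ = fun D => g (D, Multiset.card D) :=
    funext fun D => by simp only [g, coe_ofFn_comp_orderStat_map hrf rfl]
  rw [hΦ]
  exact hg.comp (measurable_id.prodMk measurable_multiset_card)

end CountingMS

theorem aggregator_measurable_of_symmetrized_measurable_general
    {X V : Type*} [MeasurableSpace X] [StandardBorelSpace X]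
    [MeasurableSpace V]
    (Φ : Multiset X → V)
    (h : ∀ m : ℕ, Measurable fun x : Fin m → X => Φ ↑(List.ofFn x)) :
    @Measurable _ _ (countingMS X) _ Φ := by
  rcases isEmpty_or_nonempty X with _ | _
  · exact @Subsingleton.measurable _ _ _ (countingMS X) _ _
  · obtain ⟨f, hf⟩ := MeasureTheory.exists_measurableEmbedding_real X
    exact measurable_of_measurable_comp_ofFn hf.measurable hf.measurable_invFun
      hf.leftInverse_invFun h

theorem aggregator_measurable_of_symmetrized_measurable
    {X V : Type*} [MeasurableSpace X] [StandardBorelSpace X]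
    [MeasurableSpace V] [StandardBorelSpace V]
    (Φ : Multiset X → V)
    (h : ∀ m : ℕ, Measurable fun x : Fin m → X => Φ ↑(List.ofFn x)) :
    @Measurable _ _ (countingMS X) _ Φ :=
  aggregator_measurable_of_symmetrized_measurable_general Φ h
end
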